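/- Let B be the MQ × TR matrix with rows indexed by pairs (m,q), m = 0,...,M-1, q = 0,...,Q-1, and entries B_{(m,q),p} = e^{-j2π β_{mq}(-1 + 2p/(TR))}, where β_{mq} = (q + mR)/2. If M = T and Q = R, then B equals the TR × TR DFT matrix up to multiplication of each column by a unimodular scalar, and hence spark(B) = TR + 1. -/

import Mathlib

open Real

-- The spark of a matrix: the smallest number of nonzero entries of a nonzero
-- vector in its kernel, with the convention that it equals (number of columns) + 1
-- when the columns are linearly independent.
open Classical in
noncomputable def spark {m n : Type*} [Fintype m] [Fintype n] (M : Matrix m n ℂ) : ℕ :=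
  if ∃ x : n → ℂ, x ≠ 0 ∧ M.mulVec x = 0 then
    sInf {k : ℕ | ∃ x : n → ℂ, x ≠ 0 ∧ M.mulVec x = 0 ∧ (Function.support x).ncard = k}
  else Fintype.card n + 1

/-!
The row of `B` indexed by `(m, q)` is the row `i = q + mR` of the `TR × TR` DFT matrix multiplied
by the unimodular scalar `e^{jπ i}`. Rescaling rows by nonzero scalars and permuting them leaves the
kernel, hence the spark, unchanged, and the DFT matrix is an invertible Vandermonde matrix in the
powers of a primitive root of unity, so its spark is `TR + 1`.
-/

open Matrix Complex

section Spark

variable {l m n : Type*} [Fintype l] [Fintype m] [Fintype n]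

theorem spark_congr {M : Matrix m n ℂ} {M' : Matrix l n ℂ}
    (h : ∀ x, M *ᵥ x = 0 ↔ M' *ᵥ x = 0) : spark M = spark M' := by
  have hker : (∃ x, x ≠ 0 ∧ M *ᵥ x = 0) ↔ ∃ x, x ≠ 0 ∧ M' *ᵥ x = 0 :=
    exists_congr fun x => and_congr_right' (h x)
  simp only [spark, h]
  classical exact if_congr hker rfl rfl

theorem spark_eq_card_add_one {M : Matrix m n ℂ} (h : Function.Injective M.mulVec) :
    spark M = Fintype.card n + 1 := by
  rw [spark, if_neg]
  rintro ⟨x, hx, hMx⟩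
  exact hx (h (hMx.trans M.mulVec_zero.symm))

theorem spark_mul_of_injective {A : Matrix l m ℂ} (hA : Function.Injective A.mulVec)
    (M : Matrix m n ℂ) : spark (A * M) = spark M :=
  spark_congr fun x => by rw [← mulVec_mulVec, ← A.mulVec_zero, hA.eq_iff]

theorem spark_submatrix_equiv (M : Matrix m n ℂ) (e : l ≃ m) :
    spark (M.submatrix e id) = spark M :=
  spark_congr fun x => e.surjective.injective_comp_right.eq_iff (a := M *ᵥ x) (b := 0)

end Spark

theorem Matrix.diagonal_mulVec_injective {n R : Type*} [Fintype n] [DecidableEq n]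
    [CommRing R] [IsDomain R] {d : n → R} (hd : ∀ i, d i ≠ 0) :
    Function.Injective (diagonal d).mulVec := fun x y hxy =>
  funext fun i => mul_left_cancel₀ (hd i) <| by
    simpa only [mulVec_diagonal] using congrFun hxy i

noncomputable def dftMatrix (N : ℕ) : Matrix (Fin N) (Fin N) ℂ :=
  of fun i p => exp (-I * (2 * π * (i : ℕ) * (p : ℕ) / N))

theorem dftMatrix_eq_vandermonde (N : ℕ) :
    dftMatrix N = vandermonde fun i : Fin N => exp (-(2 * π * I) / N) ^ (i : ℕ) := by
  ext i p
  rw [dftMatrix, vandermonde_apply, of_apply, ← Complex.exp_nat_mul, ← Complex.exp_nat_mul]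
  ring_nf

theorem dftMatrix_mulVec_injective (N : ℕ) : Function.Injective (dftMatrix N).mulVec := by
  rcases N.eq_zero_or_pos with rfl | hN
  · exact Function.injective_of_subsingleton _
  have hζ : IsPrimitiveRoot (exp (-(2 * π * I) / N)) N := by
    simpa only [← Complex.exp_neg, ← neg_div] using (isPrimitiveRoot_exp N hN.ne').inv
  rw [mulVec_injective_iff_isUnit, isUnit_iff_isUnit_det, isUnit_iff_ne_zero,
    dftMatrix_eq_vandermonde, det_vandermonde_ne_zero_iff]
  exact fun i j hij => Fin.ext (hζ.pow_inj i.isLt j.isLt hij)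

theorem spark_dftMatrix (N : ℕ) : spark (dftMatrix N) = N + 1 := by
  rw [spark_eq_card_add_one (dftMatrix_mulVec_injective N), Fintype.card_fin]

theorem stmt15_general (T R : ℕ)
    (B : Matrix (Fin T × Fin R) (Fin (T * R)) ℂ)
    (hB : ∀ (m : Fin T) (q : Fin R) (p : Fin (T * R)),
      B (m, q) p = Complex.exp (-Complex.I *
        (2 * π * (((q : ℕ) + (m : ℕ) * R : ℝ) / 2) * (-1 + 2 * (p : ℕ) / (T * R : ℝ))))) :
    (∃ d : Fin T × Fin R → ℂ, (∀ i, ‖d i‖ = 1) ∧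
      ∀ (m : Fin T) (q : Fin R) (p : Fin (T * R)),
        B (m, q) p = d (m, q) *
          Complex.exp (-Complex.I * (2 * π * ((q : ℕ) + (m : ℕ) * R : ℝ) * (p : ℕ) / (T * R)))) ∧
    spark B = T * R + 1 := by
  set d : Fin T × Fin R → ℂ := fun i => exp ((π * ((i.2 : ℕ) + (i.1 : ℕ) * R) : ℝ) * I)
  have hdft : ∀ (m : Fin T) (q : Fin R) (p : Fin (T * R)),
      B (m, q) p = d (m, q) *
        exp (-I * (2 * π * ((q : ℕ) + (m : ℕ) * R : ℝ) * (p : ℕ) / (T * R))) := by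
    intro m q p
    rw [hB, ← Complex.exp_add]
    push_cast
    ring_nf
  have hB_eq : B = diagonal d * (dftMatrix (T * R)).submatrix finProdFinEquiv id := by
    ext ⟨m, q⟩ p
    rw [hdft, diagonal_mul, submatrix_apply, id_eq, dftMatrix, of_apply, finProdFinEquiv_apply_val]
    push_cast
    ring_nf
  refine ⟨⟨d, fun i => norm_exp_ofReal_mul_I _, hdft⟩, ?_⟩
  rw [hB_eq, spark_mul_of_injective (diagonal_mulVec_injective fun i => exp_ne_zero _),
    spark_submatrix_equiv, spark_dftMatrix]

theorem stmt15 (T R : ℕ) (hT : 0 < T) (hR : 0 < R)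
    (B : Matrix (Fin T × Fin R) (Fin (T * R)) ℂ)
    (hB : ∀ (m : Fin T) (q : Fin R) (p : Fin (T * R)),
      B (m, q) p = Complex.exp (-Complex.I *
        (2 * π * (((q : ℕ) + (m : ℕ) * R : ℝ) / 2) * (-1 + 2 * (p : ℕ) / (T * R : ℝ))))) :
    (∃ d : Fin T × Fin R → ℂ, (∀ i, ‖d i‖ = 1) ∧
      ∀ (m : Fin T) (q : Fin R) (p : Fin (T * R)),
        B (m, q) p = d (m, q) *
          Complex.exp (-Complex.I * (2 * π * ((q : ℕ) + (m : ℕ) * R : ℝ) * (p : ℕ) / (T * R)))) ∧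
    spark B = T * R + 1 :=
  stmt15_general T R B hB
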